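/- Let dA, dB ≥ 2 and d = dA·dB. No complete set of d+1 pairwise mutually unbiased orthonormal bases of EuclideanSpace ℂ (Fin dA × Fin dB) can consist entirely of product vectors: in any such complete set at least one basis vector ψ satisfies P(ψ) < 1 (i.e., is entangled). -/

import Mathlib

/-- Purity of the reduced density operator on subsystem `A`. -/
noncomputable def purity {dA dB : ℕ} (ψ : EuclideanSpace ℂ (Fin dA × Fin dB)) : ℝ :=
  ∑ a : Fin dA, ∑ a' : Fin dA,
    ‖∑ b : Fin dB, ψ (a, b) * (starRingEnd ℂ) (ψ (a', b))‖ ^ 2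

/-!
The `d(d+1)` vectors `v` of a complete set of MUBs in dimension `d` form a complex projective
2-design: `∑ (v ⊗ v)(v ⊗ v)* = 1 + SWAP`. Indeed, the Hilbert–Schmidt distance between the two
operators is `∑ |⟪v, w⟫|⁴ - 4 ∑ ‖v‖⁴ + 2d(d+1)`, and the mutual unbiasedness makes the frame
potential `∑ |⟪v, w⟫|⁴` equal to `2d(d+1)`, so the distance vanishes. The purity of `ψ` is
`⟪ψ ⊗ ψ, (SWAP on the A factors) ψ ⊗ ψ⟫`, so contracting the 2-design identity shows that the
purities of all basis vectors add up to `dA dB (dA + dB)`. This is less than the number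
`dA dB (dA dB + 1)` of vectors when `dA, dB ≥ 2`, so some purity is less than `1`.
-/

open Finset ComplexConjugate

def frameOperator {κ P : Type*} [Fintype κ] (w : κ → P → ℂ) (p q : P) : ℂ :=
  ∑ a, w a p * conj (w a q)

theorem sum_sq_norm_frameOperator {κ P : Type*} [Fintype κ] [Fintype P] (w : κ → P → ℂ) :
    ∑ p, ∑ q, ‖frameOperator w p q‖ ^ 2 = ∑ a, ∑ b, ‖∑ p, conj (w a p) * w b p‖ ^ 2 := by
  apply Complex.ofReal_injective
  simp only [Complex.ofReal_sum, Complex.ofReal_pow, ← Complex.mul_conj', frameOperator, map_sum,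
    map_mul, Complex.conj_conj, sum_mul_sum]
  simp_rw [sum_comm (s := (univ : Finset P)) (t := (univ : Finset κ))]
  rw [sum_comm]
  congr! 4 with a _ b _ p _ q
  ring

section TensorSquare

variable {ι : Type*}

def tensorSq (v : EuclideanSpace ℂ ι) (p : ι × ι) : ℂ := v p.1 * v p.2

lemma tensorSq_swap (v : EuclideanSpace ℂ ι) (p : ι × ι) : tensorSq v p.swap = tensorSq v p :=
  mul_comm _ _

lemma sum_conj_tensorSq_mul_tensorSq [Fintype ι] (x y : EuclideanSpace ℂ ι) :
    ∑ p, conj (tensorSq x p) * tensorSq y p = inner ℂ x y ^ 2 := by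
  simp only [EuclideanSpace.inner_eq_star_dotProduct, dotProduct, sq, sum_mul_sum,
    Fintype.sum_prod_type, tensorSq, map_mul]
  congr! 2 with i _ j
  simp only [Pi.star_apply, RCLike.star_def]
  ring

end TensorSquare

section IdAddSwap

variable {ι : Type*} [DecidableEq ι]

/-- The operator `1 + SWAP` on `ℂ^ι ⊗ ℂ^ι`, twice the projection onto the symmetric subspace. -/
def idAddSwap (p q : ι × ι) : ℂ := (if p = q then 1 else 0) + (if p = q.swap then 1 else 0)

lemma conj_idAddSwap (p q : ι × ι) : conj (idAddSwap p q) = idAddSwap p q := by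
  simp [idAddSwap, apply_ite conj]

lemma sq_norm_idAddSwap (p q : ι × ι) :
    ‖idAddSwap p q‖ ^ 2 = (if q = p then 1 else 0) + (if q = p.swap then 1 else 0) +
      if q = p ∧ p.1 = p.2 then 2 else 0 := by
  unfold idAddSwap
  split_ifs <;> norm_num <;> grind

variable [Fintype ι]

lemma sum_sq_norm_idAddSwap :
    ∑ p : ι × ι, ∑ q, ‖idAddSwap p q‖ ^ 2 = 2 * (Fintype.card ι ^ 2 + Fintype.card ι) := by
  simp [sq_norm_idAddSwap, sum_add_distrib, ite_and, Fintype.sum_prod_type]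
  ring

lemma sum_frameOperator_mul_idAddSwap {κ : Type*} [Fintype κ] (w : κ → ι × ι → ℂ)
    (hw : ∀ a p, w a p.swap = w a p) :
    ∑ p, ∑ q, frameOperator w p q * idAddSwap p q = 2 * ∑ a, ∑ p, conj (w a p) * w a p := by
  have hswap : ∀ p q : ι × ι, p = q.swap ↔ q = p.swap := fun p q => by
    constructor <;> rintro rfl <;> simp
  simp only [idAddSwap, mul_add, mul_ite, mul_one, mul_zero, sum_add_distrib, hswap, sum_ite_eq,
    sum_ite_eq', mem_univ, if_true, frameOperator, hw]
  rw [sum_comm]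
  simp only [mul_comm, two_mul]

end IdAddSwap

section Design

variable {κ ι : Type*} [Fintype κ] [Fintype ι] [DecidableEq ι]

theorem sum_sq_norm_frameOperator_tensorSq_sub_idAddSwap (v : κ → EuclideanSpace ℂ ι) :
    ∑ p, ∑ q, ‖frameOperator (fun a => tensorSq (v a)) p q - idAddSwap p q‖ ^ 2 =
      ∑ a, ∑ b, ‖inner ℂ (v a) (v b)‖ ^ 4 - 4 * ∑ a, ‖v a‖ ^ 4 +
        2 * (Fintype.card ι ^ 2 + Fintype.card ι) := by
  have hT : ∑ p, ∑ q, ‖frameOperator (fun a => tensorSq (v a)) p q‖ ^ 2 =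
      ∑ a, ∑ b, ‖inner ℂ (v a) (v b)‖ ^ 4 := by
    simp only [sum_sq_norm_frameOperator, sum_conj_tensorSq_mul_tensorSq, norm_pow, ← pow_mul]
  have hTG : ∑ p, ∑ q, frameOperator (fun a => tensorSq (v a)) p q * idAddSwap p q =
      ((2 * ∑ a, ‖v a‖ ^ 4 : ℝ) : ℂ) := by
    rw [sum_frameOperator_mul_idAddSwap _ fun a => tensorSq_swap (v a)]
    simp only [sum_conj_tensorSq_mul_tensorSq, inner_self_eq_norm_sq_to_K, ← pow_mul]
    push_cast
    rfl
  have hG := sum_sq_norm_idAddSwap (ι := ι)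
  simp only [Complex.sq_norm] at hT hG ⊢
  simp only [Complex.normSq_sub, conj_idAddSwap, sum_add_distrib, sum_sub_distrib, ← mul_sum,
    ← Complex.re_sum, hTG, Complex.ofReal_re, hT, hG]
  ring

theorem frameOperator_tensorSq_eq_idAddSwap (v : κ → EuclideanSpace ℂ ι) (hv : ∀ a, ‖v a‖ = 1)
    (hcard : Fintype.card κ = Fintype.card ι ^ 2 + Fintype.card ι)
    (hfp : ∑ a, ∑ b, ‖inner ℂ (v a) (v b)‖ ^ 4 = 2 * (Fintype.card ι ^ 2 + Fintype.card ι)) :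
    frameOperator (fun a => tensorSq (v a)) = idAddSwap := by
  set D : ι × ι → ι × ι → ℝ :=
    fun p q => ‖frameOperator (fun a => tensorSq (v a)) p q - idAddSwap p q‖ ^ 2
  have hzero : ∑ p, ∑ q, D p q = 0 := by
    rw [sum_sq_norm_frameOperator_tensorSq_sub_idAddSwap, hfp]
    simp [hv, hcard]
    ring
  have hrow : ∀ p, ∑ q, D p q = 0 :=
    fun p => (sum_eq_zero_iff_of_nonneg fun p _ => sum_nonneg fun q _ => by positivity).1
      hzero p (mem_univ _)
  ext p q
  rw [← sub_eq_zero, ← norm_eq_zero, ← pow_eq_zero_iff two_ne_zero]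
  exact (sum_eq_zero_iff_of_nonneg fun q _ => by positivity).1 (hrow p) q (mem_univ _)

end Design

theorem sum_norm_inner_pow_four_of_mutuallyUnbiased {κ β 𝕜 E : Type*} [Fintype κ] [Fintype β]
    [Nonempty β] [RCLike 𝕜] [NormedAddCommGroup E] [InnerProductSpace 𝕜 E]
    (e : κ → OrthonormalBasis β 𝕜 E)
    (hmub : ∀ m n, m ≠ n → ∀ j k,
      ‖(inner 𝕜 (e m j) (e n k) : 𝕜)‖ ^ 2 = 1 / (Fintype.card β : ℝ)) :
    ∑ a : κ × β, ∑ b : κ × β, ‖(inner 𝕜 (e a.1 a.2) (e b.1 b.2) : 𝕜)‖ ^ 4 =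
      Fintype.card κ * (Fintype.card β + Fintype.card κ - 1) := by
  classical
  have hblock : ∀ m n, ∑ j, ∑ k, ‖(inner 𝕜 (e m j) (e n k) : 𝕜)‖ ^ 4 =
      if m = n then (Fintype.card β : ℝ) else 1 := by
    intro m n
    split_ifs with hmn
    · subst hmn
      simp [orthonormal_iff_ite.1 (e m).orthonormal, apply_ite (‖·‖ ^ 4)]
    · have hβ : (Fintype.card β : ℝ) ≠ 0 := by positivity
      simp only [show (4 : ℕ) = 2 * 2 from rfl, pow_mul, hmub m n hmn, sum_const, card_univ,
        nsmul_eq_mul]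
      field_simp
  have hsplit : ∀ m n : κ, (if m = n then (Fintype.card β : ℝ) else 1) =
      (if m = n then (Fintype.card β : ℝ) - 1 else 0) + 1 := by
    intro m n
    split_ifs <;> ring
  calc ∑ a : κ × β, ∑ b : κ × β, ‖(inner 𝕜 (e a.1 a.2) (e b.1 b.2) : 𝕜)‖ ^ 4
      = ∑ m, ∑ n, ∑ j, ∑ k, ‖(inner 𝕜 (e m j) (e n k) : 𝕜)‖ ^ 4 := by
        simp only [Fintype.sum_prod_type]
        exact sum_congr rfl fun m _ => sum_comm
    _ = Fintype.card κ * (Fintype.card β + Fintype.card κ - 1) := by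
        simp only [hblock, hsplit, sum_add_distrib, sum_ite_eq, mem_univ, if_true, sum_const,
          card_univ, nsmul_eq_mul, mul_one]
        ring

section Purity

variable {dA dB : ℕ}

/-- The purity of `ψ` is `⟪ψ ⊗ ψ, X (ψ ⊗ ψ)⟫` with `X` the swap of the two `A` factors. -/
lemma ofReal_purity (ψ : EuclideanSpace ℂ (Fin dA × Fin dB)) :
    (purity ψ : ℂ) = ∑ a, ∑ a', ∑ b, ∑ b',
      tensorSq ψ ((a, b), (a', b')) * conj (tensorSq ψ ((a', b), (a, b'))) := by
  simp only [purity, Complex.ofReal_sum, Complex.ofReal_pow, ← Complex.mul_conj', map_sum,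
    sum_mul_sum]
  congr! 4 with a _ a' _ b _ b'
  simp only [tensorSq, map_mul, Complex.conj_conj]
  ring

lemma idAddSwap_partialSwap (a a' : Fin dA) (b b' : Fin dB) :
    idAddSwap ((a, b), (a', b')) ((a', b), (a, b')) =
      (if a = a' then 1 else 0) + (if b = b' then 1 else 0) := by
  simp [idAddSwap, eq_comm]

theorem sum_purity_of_frameOperator_eq_idAddSwap {κ : Type*} [Fintype κ]
    (v : κ → EuclideanSpace ℂ (Fin dA × Fin dB))
    (hv : frameOperator (fun a => tensorSq (v a)) = idAddSwap) :
    ∑ c, purity (v c) = dA * dB * (dA + dB) := by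
  have hT : ∀ p q, ∑ c, tensorSq (v c) p * conj (tensorSq (v c) q) = idAddSwap p q :=
    fun p q => congrFun (congrFun hv p) q
  apply Complex.ofReal_injective
  simp only [Complex.ofReal_sum, ofReal_purity]
  simp_rw [sum_comm (s := (univ : Finset κ))]
  simp only [hT, idAddSwap_partialSwap, sum_add_distrib, sum_const, card_univ, Fintype.card_fin,
    nsmul_eq_mul, mul_ite, mul_one, mul_zero, sum_ite_eq, mem_univ, if_true]
  push_cast
  ring

end Purity

theorem complete_mub_not_all_product (dA dB : ℕ) (hA : 2 ≤ dA) (hB : 2 ≤ dB)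
    (e : Fin (dA * dB + 1) →
      OrthonormalBasis (Fin (dA * dB)) ℂ (EuclideanSpace ℂ (Fin dA × Fin dB)))
    (hmub : ∀ m n : Fin (dA * dB + 1), m ≠ n →
      ∀ j k : Fin (dA * dB),
        ‖(inner ℂ (e m j) (e n k) : ℂ)‖ ^ 2 = 1 / (dA * dB : ℝ)) :
    ∃ (m : Fin (dA * dB + 1)) (j : Fin (dA * dB)), purity (e m j) < 1 := by
  have : NeZero (dA * dB) := ⟨Nat.mul_ne_zero (by omega) (by omega)⟩
  let v : Fin (dA * dB + 1) × Fin (dA * dB) → EuclideanSpace ℂ (Fin dA × Fin dB) :=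
    fun a => e a.1 a.2
  have hdesign : frameOperator (fun a => tensorSq (v a)) = idAddSwap := by
    refine frameOperator_tensorSq_eq_idAddSwap v (fun a => (e a.1).orthonormal.1 a.2)
      (by simp; ring) ?_
    rw [sum_norm_inner_pow_four_of_mutuallyUnbiased e (by simpa using hmub)]
    simp
    ring
  by_contra! hpure
  have hle : ((dA * dB + 1) * (dA * dB) : ℝ) ≤ dA * dB * (dA + dB) := by
    calc ((dA * dB + 1) * (dA * dB) : ℝ)
        = ∑ _a : Fin (dA * dB + 1) × Fin (dA * dB), (1 : ℝ) := by simp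
      _ ≤ ∑ a, purity (v a) := sum_le_sum fun a _ => hpure a.1 a.2
      _ = dA * dB * (dA + dB) := sum_purity_of_frameOperator_eq_idAddSwap v hdesign
  have hA' : (1 : ℝ) < dA := by exact_mod_cast hA
  have hB' : (1 : ℝ) < dB := by exact_mod_cast hB
  nlinarith [mul_pos (mul_pos (by linarith : (0 : ℝ) < dA) (by linarith : (0 : ℝ) < dB))
    (mul_pos (sub_pos.2 hA') (sub_pos.2 hB'))]
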